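/- For every odd natural number m ≥ 3, the Artin group presented by generators a, b and the single relator prod(a,b,m)·(prod(b,a,m))⁻¹, where prod(a,b,k) = abab… is the alternating word of length k starting with a, is isomorphic to the group presented by generators x, y and the single relator x²y^{−m} (i.e., ⟨x, y | x² = y^m⟩). -/
import Mathlib


/-- `altProd a b k` is the alternating word `abab…` of length `k` starting with `a`
(`prod(a,b,k)` in the paper). -/
def altProd {G : Type*} [Monoid G] : G → G → ℕ → G
  | _, _, 0 => 1
  | a, b, k + 1 => a * altProd b a k

/-- The single relator `prod(a,b,m)·(prod(b,a,m))⁻¹` of the Artin group of dihedral type `m`,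
with `a, b` the generators `0, 1 : Fin 2`. -/
def artinRels (m : ℕ) : Set (FreeGroup (Fin 2)) :=
  {altProd (FreeGroup.of 0) (FreeGroup.of 1) m * (altProd (FreeGroup.of 1) (FreeGroup.of 0) m)⁻¹}

lemma altProd_map {G H : Type*} [Monoid G] [Monoid H] (f : G →* H) (a b : G) :
    ∀ n, f (altProd a b n) = altProd (f a) (f b) n := by
  intro n
  induction n generalizing a b with
  | zero => simp [altProd]
  | succ n ih => simp [altProd, ih]

lemma altProd_odd {G : Type*} [Monoid G] (a b : G) (k : ℕ) :
    altProd a b (2 * k + 1) = a * (b * a) ^ k := by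
  induction k generalizing a b with
  | zero => simp [altProd]
  | succ k ih =>
    have h : 2 * (k + 1) + 1 = (2 * k + 1) + 1 + 1 := by ring
    rw [h]
    show a * altProd b a (2 * k + 1 + 1) = _
    show a * (b * altProd a b (2 * k + 1)) = _
    rw [ih, pow_succ']
    simp [mul_assoc]

lemma mul_pow_swap {G : Type*} [Monoid G] (a b : G) (k : ℕ) :
    a * (b * a) ^ k = (a * b) ^ k * a := by
  induction k with
  | zero => simp
  | succ k ih =>
    rw [pow_succ, pow_succ, ← mul_assoc, ih]
    simp [mul_assoc]

/-- For every odd `m ≥ 3`, the Artin group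
`⟨a, b | prod(a,b,m) = prod(b,a,m)⟩` of dihedral type `m` is isomorphic to
`⟨x, y | x² = y^m⟩`. -/
theorem stmt_15 (m : ℕ) (hm : 3 ≤ m) (hodd : Odd m) :
    Nonempty (PresentedGroup (artinRels m) ≃*
      PresentedGroup ({FreeGroup.of 0 ^ 2 * (FreeGroup.of 1 ^ m)⁻¹} :
        Set (FreeGroup (Fin 2)))) := by
  obtain ⟨k, hk⟩ := hodd
  have hk' : m = 2 * k + 1 := by omega
  subst hk'
  set rels2 : Set (FreeGroup (Fin 2)) :=
    {FreeGroup.of 0 ^ 2 * (FreeGroup.of 1 ^ (2 * k + 1))⁻¹} with hr2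
  -- generators of the two presented groups
  set A : PresentedGroup (artinRels (2 * k + 1)) := PresentedGroup.of 0 with hA
  set B : PresentedGroup (artinRels (2 * k + 1)) := PresentedGroup.of 1 with hB
  set X : PresentedGroup rels2 := PresentedGroup.of 0 with hX
  set Y : PresentedGroup rels2 := PresentedGroup.of 1 with hY
  -- the defining relations hold in the quotients
  have relG : A * (B * A) ^ k = B * (A * B) ^ k := by
    have h1 : (PresentedGroup.mk (artinRels (2 * k + 1)))
        (altProd (FreeGroup.of 0) (FreeGroup.of 1) (2 * k + 1) *
          (altProd (FreeGroup.of 1) (FreeGroup.of 0) (2 * k + 1))⁻¹) = 1 := by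
      apply (QuotientGroup.eq_one_iff _).2
      exact Subgroup.subset_normalClosure rfl
    rw [map_mul, map_inv, altProd_map, altProd_map, mul_inv_eq_one] at h1
    rw [altProd_odd, altProd_odd] at h1
    exact h1
  have relH : X ^ 2 = Y ^ (2 * k + 1) := by
    have h1 : (PresentedGroup.mk rels2)
        (FreeGroup.of 0 ^ 2 * (FreeGroup.of 1 ^ (2 * k + 1))⁻¹) = 1 := by
      apply (QuotientGroup.eq_one_iff _).2
      exact Subgroup.subset_normalClosure rfl
    rw [map_mul, map_inv, map_pow, map_pow, mul_inv_eq_one] at h1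
    exact h1
  -- maps on generators
  set f : Fin 2 → PresentedGroup rels2 := ![X * (Y⁻¹) ^ k, Y ^ (k + 1) * X⁻¹] with hf
  set g : Fin 2 → PresentedGroup (artinRels (2 * k + 1)) := ![A * (B * A) ^ k, B * A] with hg
  have hf0 : f 0 = X * (Y⁻¹) ^ k := rfl
  have hf1 : f 1 = Y ^ (k + 1) * X⁻¹ := rfl
  have hg0 : g 0 = A * (B * A) ^ k := rfl
  have hg1 : g 1 = B * A := rfl
  -- f respects the Artin relation
  have hfrel : ∀ r ∈ artinRels (2 * k + 1), FreeGroup.lift f r = 1 := by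
    intro r hr
    rw [artinRels, Set.mem_singleton_iff] at hr
    subst hr
    rw [map_mul, map_inv]
    rw [altProd_map, altProd_map, FreeGroup.lift_apply_of, FreeGroup.lift_apply_of]
    rw [altProd_odd, altProd_odd, hf0, hf1, mul_inv_eq_one]
    have h10 : Y ^ (k + 1) * X⁻¹ * (X * Y⁻¹ ^ k) = Y := by group
    have h01 : X * Y⁻¹ ^ k * (Y ^ (k + 1) * X⁻¹) = X * Y * X⁻¹ := by group
    rw [h10, h01, conj_pow]
    have : Y ^ (k + 1) * X⁻¹ * (X * Y ^ k * X⁻¹) = Y ^ (2 * k + 1) * X⁻¹ := by group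
    rw [this, ← relH]
    group
  -- g respects the relation x² = y^m
  have hgrel : ∀ r ∈ rels2, FreeGroup.lift g r = 1 := by
    intro r hr
    rw [hr2, Set.mem_singleton_iff] at hr
    subst hr
    rw [map_mul, map_inv, map_pow, map_pow, FreeGroup.lift_apply_of, FreeGroup.lift_apply_of,
      hg0, hg1, mul_inv_eq_one]
    calc (A * (B * A) ^ k) ^ 2
        = (B * (A * B) ^ k) * (A * (B * A) ^ k) := by rw [← relG]; ring_nf; rw [sq]
      _ = B * ((A * B) ^ k * A) * (B * A) ^ k := by simp [mul_assoc]
      _ = B * (A * (B * A) ^ k) * (B * A) ^ k := by rw [← mul_pow_swap]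
      _ = (B * A) ^ (2 * k + 1) := by
          rw [← mul_assoc, ← pow_succ', ← pow_add]
          congr 1
          omega
  set φ : PresentedGroup (artinRels (2 * k + 1)) →* PresentedGroup rels2 :=
    PresentedGroup.toGroup hfrel with hφ
  set ψ : PresentedGroup rels2 →* PresentedGroup (artinRels (2 * k + 1)) :=
    PresentedGroup.toGroup hgrel with hψ
  have hφ0 : φ A = X * (Y⁻¹) ^ k := PresentedGroup.toGroup.of hfrel
  have hφ1 : φ B = Y ^ (k + 1) * X⁻¹ := PresentedGroup.toGroup.of hfrel
  have hψ0 : ψ X = A * (B * A) ^ k := PresentedGroup.toGroup.of hgrel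
  have hψ1 : ψ Y = B * A := PresentedGroup.toGroup.of hgrel
  refine ⟨MonoidHom.toMulEquiv φ ψ ?_ ?_⟩
  · ext x
    fin_cases x <;> simp only [MonoidHom.coe_comp, Function.comp_apply, MonoidHom.id_apply]
    · show ψ (φ A) = A
      rw [hφ0, map_mul, map_pow, map_inv, hψ0, hψ1, inv_pow, mul_assoc,
        mul_inv_cancel, mul_one]
    · show ψ (φ B) = B
      rw [hφ1, map_mul, map_pow, map_inv, hψ0, hψ1, pow_succ', mul_inv_rev]
      simp [mul_assoc]
  · ext x
    fin_cases x <;> simp only [MonoidHom.coe_comp, Function.comp_apply, MonoidHom.id_apply]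
    · show φ (ψ X) = X
      rw [hψ0, map_mul, map_pow, map_mul, hφ0, hφ1]
      have h10 : Y ^ (k + 1) * X⁻¹ * (X * Y⁻¹ ^ k) = Y := by group
      rw [h10, inv_pow, mul_assoc, inv_mul_cancel, mul_one]
    · show φ (ψ Y) = Y
      rw [hψ1, map_mul, hφ0, hφ1]
      group
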